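/- arXiv:1706.08812 — 4 statements merged into one kernel-verified Lean document; each statement's English description precedes it below -/
import Mathlib

section
/- Let L > 0 and M ≥ 0. Let R, Q : ℝ → ℝ be differentiable at every point of the interval [0, L], and assume that for all s ∈ [0, L] one has Q'(s) ≥ 0 and (R'(s))² ≤ M · Q'(s). Then for all a, b ∈ [0, L], (R(a) − R(b))² ≤ M · (Q(a) − Q(b)) · (a − b). -/
/-- Mean-value/Cauchy–Schwarz estimate from Step 1 of the uniqueness proof:
if `Q' ≥ 0` and `(R')² ≤ M · Q'` on `[0, L]`, then
`(R a − R b)² ≤ M · (Q a − Q b) · (a − b)` for all `a, b ∈ [0, L]`. -/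
theorem stmt_0 (L M : ℝ) (hL : 0 < L) (hM : 0 ≤ M) (R Q : ℝ → ℝ)
    (hR : ∀ s ∈ Set.Icc (0 : ℝ) L, DifferentiableAt ℝ R s)
    (hQ : ∀ s ∈ Set.Icc (0 : ℝ) L, DifferentiableAt ℝ Q s)
    (hQ' : ∀ s ∈ Set.Icc (0 : ℝ) L, 0 ≤ deriv Q s)
    (hRQ : ∀ s ∈ Set.Icc (0 : ℝ) L, (deriv R s) ^ 2 ≤ M * deriv Q s) :
    ∀ a ∈ Set.Icc (0 : ℝ) L, ∀ b ∈ Set.Icc (0 : ℝ) L,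
      (R a - R b) ^ 2 ≤ M * (Q a - Q b) * (a - b) := by
  -- It suffices to treat the case `b ≤ a`.
  suffices key : ∀ a ∈ Set.Icc (0 : ℝ) L, ∀ b ∈ Set.Icc (0 : ℝ) L, b ≤ a →
      (R a - R b) ^ 2 ≤ M * (Q a - Q b) * (a - b) by
    intro a ha b hb
    rcases le_total b a with h | h
    · exact key a ha b hb h
    · have := key b hb a ha h
      nlinarith [this]
  intro a ha b hb hba
  -- Main estimate: for every real `c`, `2c(Ra−Rb) ≤ c²(a−b) + M(Qa−Qb)`.
  have claim : ∀ c : ℝ, 2 * c * (R a - R b) ≤ c ^ 2 * (a - b) + M * (Q a - Q b) := by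
    intro c
    set f : ℝ → ℝ := fun t => c ^ 2 * t + M * Q t - 2 * c * R t with hf
    have hsub : Set.Icc b a ⊆ Set.Icc (0 : ℝ) L := by
      intro s hs
      exact ⟨le_trans hb.1 hs.1, le_trans hs.2 ha.2⟩
    have hderiv : ∀ s ∈ Set.Icc b a,
        HasDerivAt f (c ^ 2 * 1 + M * deriv Q s - 2 * c * deriv R s) s := by
      intro s hs
      exact (((hasDerivAt_id s).const_mul (c ^ 2)).add
        (((hQ s (hsub hs)).hasDerivAt).const_mul M)).sub
        (((hR s (hsub hs)).hasDerivAt).const_mul (2 * c))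
    have hmono : MonotoneOn f (Set.Icc b a) := by
      apply monotoneOn_of_deriv_nonneg (convex_Icc b a)
      · intro s hs
        exact ((hderiv s hs).differentiableAt).continuousAt.continuousWithinAt
      · intro s hs
        rw [interior_Icc] at hs
        exact ((hderiv s (Set.mem_Icc_of_Ioo hs)).differentiableAt).differentiableWithinAt
      · intro s hs
        rw [interior_Icc] at hs
        have hs' := Set.mem_Icc_of_Ioo hs
        rw [(hderiv s hs').deriv]
        have h1 := hRQ s (hsub hs')
        nlinarith [sq_nonneg (c - deriv R s)]
    have hfb : f b ≤ f a :=
      hmono (Set.left_mem_Icc.mpr hba) (Set.right_mem_Icc.mpr hba) hba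
    simp only [hf] at hfb
    nlinarith [hfb]
  rcases eq_or_lt_of_le hba with h | h
  · subst h
    simp
  · have hab : 0 < a - b := by linarith
    set c := (R a - R b) / (a - b) with hc
    have hcancel : c * (a - b) = R a - R b := div_mul_cancel₀ _ hab.ne'
    have h1 := claim c
    nlinarith [h1, hcancel, hab, mul_le_mul_of_nonneg_right h1 hab.le,
      sq_nonneg (c * (a - b))]
end

section
/- Let L > 0, M ≥ 0, and ε > 0. Let R, Q : ℝ → ℝ be differentiable at every point of [0, L] with Q'(s) ≥ 0 and (R'(s))² ≤ M · Q'(s) for all s ∈ [0, L]. Then for all a, b ∈ [0, L], (R(a) − R(b))² / ((Q(a) − Q(b))·(a − b) + ε) ≤ M. -/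
/-!
For every real `t`, the function `s ↦ t² s + M Q(s) − 2t R(s)` has derivative
`t² + M Q' − 2t R' ≥ (t − R')² ≥ 0`, so it is monotone. Comparing its values at `a ≤ b` shows that
the quadratic `(b − a) t² − 2 (R b − R a) t + M (Q b − Q a)` is nonnegative in `t`; its discriminant
gives `(R b − R a)² ≤ M (Q b − Q a)(b − a)`, and `Q' ≥ 0` keeps the denominator above `ε`.
-/

open Set

lemma monotoneOn_of_differentiableAt_of_deriv_nonneg {D : Set ℝ} {f : ℝ → ℝ} (hD : Convex ℝ D)
    (hf : ∀ x ∈ D, DifferentiableAt ℝ f x) (hf' : ∀ x ∈ D, 0 ≤ deriv f x) : MonotoneOn f D :=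
  monotoneOn_of_deriv_nonneg hD (fun x hx => (hf x hx).continuousAt.continuousWithinAt)
    (fun x hx => (hf x (interior_subset hx)).differentiableWithinAt)
    (fun x hx => hf' x (interior_subset hx))

section SqDerivLe

variable {D : Set ℝ} {f Q : ℝ → ℝ} {M : ℝ}

lemma two_mul_mul_sub_le_of_sq_deriv_le (hD : Convex ℝ D)
    (hf : ∀ s ∈ D, DifferentiableAt ℝ f s) (hQ : ∀ s ∈ D, DifferentiableAt ℝ Q s)
    (hfQ : ∀ s ∈ D, deriv f s ^ 2 ≤ M * deriv Q s) (t : ℝ) {a b : ℝ} (ha : a ∈ D) (hb : b ∈ D)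
    (hab : a ≤ b) :
    2 * t * (f b - f a) ≤ t ^ 2 * (b - a) + M * (Q b - Q a) := by
  have hderiv : ∀ s ∈ D, HasDerivAt (fun s => t ^ 2 * s + M * Q s - 2 * t * f s)
      (t ^ 2 + M * deriv Q s - 2 * t * deriv f s) s := fun s hs =>
    ((((hasDerivAt_id' s).const_mul (t ^ 2)).add ((hQ s hs).hasDerivAt.const_mul M)).sub
      ((hf s hs).hasDerivAt.const_mul (2 * t))).congr_deriv (by ring)
  have hmono : MonotoneOn (fun s => t ^ 2 * s + M * Q s - 2 * t * f s) D :=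
    monotoneOn_of_differentiableAt_of_deriv_nonneg hD
      (fun s hs => (hderiv s hs).differentiableAt) fun s hs => by
        rw [(hderiv s hs).deriv]
        nlinarith [hfQ s hs, sq_nonneg (t - deriv f s)]
  linarith [hmono ha hb hab]

lemma sq_sub_le_of_sq_deriv_le (hD : Convex ℝ D)
    (hf : ∀ s ∈ D, DifferentiableAt ℝ f s) (hQ : ∀ s ∈ D, DifferentiableAt ℝ Q s)
    (hfQ : ∀ s ∈ D, deriv f s ^ 2 ≤ M * deriv Q s) {a b : ℝ} (ha : a ∈ D) (hb : b ∈ D) :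
    (f a - f b) ^ 2 ≤ M * ((Q a - Q b) * (a - b)) := by
  wlog hab : a ≤ b generalizing a b
  · linarith [this hb ha (le_of_not_ge hab)]
  have hquad : ∀ t, 0 ≤ (b - a) * (t * t) + (-2 * (f b - f a)) * t + M * (Q b - Q a) :=
    fun t => by linarith [two_mul_mul_sub_le_of_sq_deriv_le hD hf hQ hfQ t ha hb hab]
  have hdisc := discrim_le_zero hquad
  rw [discrim] at hdisc
  linarith

end SqDerivLe

theorem stmt_1_general (L M ε : ℝ) (hM : 0 ≤ M) (hε : 0 < ε) (R Q : ℝ → ℝ)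
    (hR : ∀ s ∈ Set.Icc (0 : ℝ) L, DifferentiableAt ℝ R s)
    (hQ : ∀ s ∈ Set.Icc (0 : ℝ) L, DifferentiableAt ℝ Q s)
    (hQ' : ∀ s ∈ Set.Icc (0 : ℝ) L, 0 ≤ deriv Q s)
    (hRQ : ∀ s ∈ Set.Icc (0 : ℝ) L, (deriv R s) ^ 2 ≤ M * deriv Q s) :
    ∀ a ∈ Set.Icc (0 : ℝ) L, ∀ b ∈ Set.Icc (0 : ℝ) L,
      (R a - R b) ^ 2 / ((Q a - Q b) * (a - b) + ε) ≤ M := by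
  intro a ha b hb
  have hQmono : MonotoneOn Q (Icc 0 L) :=
    monotoneOn_of_differentiableAt_of_deriv_nonneg (convex_Icc 0 L) hQ hQ'
  have hprod : 0 ≤ (Q a - Q b) * (a - b) :=
    (monovaryOn_id_iff.2 hQmono).sub_mul_sub_nonneg hb ha
  have hsq := sq_sub_le_of_sq_deriv_le (convex_Icc 0 L) hR hQ hRQ ha hb
  rw [div_le_iff₀ (by linarith)]
  linarith [mul_nonneg hM hε.le]

/-- Boundedness of the quotient in estimate (2.aux2) of the uniqueness proof:
if `Q' ≥ 0` and `(R')² ≤ M · Q'` on `[0, L]`, then for all `a, b ∈ [0, L]` and `ε > 0`,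
`(R a − R b)² / ((Q a − Q b)·(a − b) + ε) ≤ M`. -/
theorem stmt_1 (L M ε : ℝ) (hL : 0 < L) (hM : 0 ≤ M) (hε : 0 < ε) (R Q : ℝ → ℝ)
    (hR : ∀ s ∈ Set.Icc (0 : ℝ) L, DifferentiableAt ℝ R s)
    (hQ : ∀ s ∈ Set.Icc (0 : ℝ) L, DifferentiableAt ℝ Q s)
    (hQ' : ∀ s ∈ Set.Icc (0 : ℝ) L, 0 ≤ deriv Q s)
    (hRQ : ∀ s ∈ Set.Icc (0 : ℝ) L, (deriv R s) ^ 2 ≤ M * deriv Q s) :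
    ∀ a ∈ Set.Icc (0 : ℝ) L, ∀ b ∈ Set.Icc (0 : ℝ) L,
      (R a - R b) ^ 2 / ((Q a - Q b) * (a - b) + ε) ≤ M :=
  stmt_1_general L M ε hM hε R Q hR hQ hQ' hRQ
end

section
/- Let ε > 0 and define h_ε(s) = (s + ε)·(log(s + ε) − 1) + 1 for s ≥ 0. Then for all real u, v ≥ 0, h_ε(u) + h_ε(v) − 2·h_ε((u + v)/2) ≥ (u − v)² / (4·(max(u, v) + ε)). -/
/-!
Up to an affine term, which cancels in the second difference, `h_ε(s)` is `φ(s + ε)` with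
`φ(x) = x log x`. Since `φ''(x) = 1/x ≥ 1/M` on `(0, M]`, `φ` is `1/M`-strongly convex there,
and the midpoint form of strong convexity with `M = max u v + ε` is exactly the claimed bound.
-/

open Real Set

theorem strongConvexOn_of_hasDerivWithinAt2_ge {D : Set ℝ} (hD : Convex ℝ D) {f f' f'' : ℝ → ℝ}
    {m : ℝ} (hf : ContinuousOn f D)
    (hf' : ∀ x ∈ interior D, HasDerivWithinAt f (f' x) (interior D) x)
    (hf'' : ∀ x ∈ interior D, HasDerivWithinAt f' (f'' x) (interior D) x)
    (hm : ∀ x ∈ interior D, m ≤ f'' x) : StrongConvexOn D m f := by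
  rw [strongConvexOn_iff_convex]
  simp only [Real.norm_eq_abs, sq_abs]
  refine convexOn_of_hasDerivWithinAt2_nonneg hD (f' := fun x ↦ f' x - m * x)
    (f'' := fun x ↦ f'' x - m) (by fun_prop) (fun x hx ↦ ?_) (fun x hx ↦ ?_)
    (fun x hx ↦ sub_nonneg.2 (hm x hx))
  · exact ((hf' x hx).sub (((hasDerivAt_pow 2 x).const_mul (m / 2)).hasDerivWithinAt)).congr_deriv
      (by push_cast; ring)
  · exact ((hf'' x hx).sub (((hasDerivAt_id x).const_mul m).hasDerivWithinAt)).congr_deriv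
      (by rw [mul_one])

theorem StrongConvexOn.sq_le_add_sub_two_mul_midpoint {s : Set ℝ} {f : ℝ → ℝ} {m x y : ℝ}
    (hf : StrongConvexOn s m f) (hx : x ∈ s) (hy : y ∈ s) :
    m / 4 * (x - y) ^ 2 ≤ f x + f y - 2 * f ((x + y) / 2) := by
  have h := (show UniformConvexOn s _ f from hf).2 hx hy one_half_pos.le one_half_pos.le
    (add_halves 1)
  simp only [smul_eq_mul, Real.norm_eq_abs, sq_abs] at h
  rw [show 1 / 2 * x + 1 / 2 * y = (x + y) / 2 by ring] at h
  linarith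

theorem strongConvexOn_mul_log (M : ℝ) : StrongConvexOn (Ioc 0 M) M⁻¹ (fun x ↦ x * log x) := by
  refine strongConvexOn_of_hasDerivWithinAt2_ge (convex_Ioc 0 M) (f' := fun x ↦ log x + 1)
    (f'' := fun x ↦ x⁻¹) continuous_mul_log.continuousOn (fun x hx ↦ ?_) (fun x hx ↦ ?_)
    (fun x hx ↦ ?_) <;> rw [interior_Ioc] at hx
  · exact (hasDerivAt_mul_log hx.1.ne').hasDerivWithinAt
  · exact ((hasDerivAt_log hx.1.ne').add_const 1).hasDerivWithinAt
  · exact inv_anti₀ hx.1 hx.2.le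

theorem sq_div_le_mul_log_add_mul_log_sub_two_mul_midpoint {x y : ℝ} (hx : 0 < x) (hy : 0 < y) :
    (x - y) ^ 2 / (4 * max x y) ≤
      x * log x + y * log y - 2 * ((x + y) / 2 * log ((x + y) / 2)) := by
  have hmax : 0 < max x y := lt_max_of_lt_left hx
  convert (strongConvexOn_mul_log (max x y)).sq_le_add_sub_two_mul_midpoint
    ⟨hx, le_max_left x y⟩ ⟨hy, le_max_right x y⟩ using 1
  field_simp

/-- Lower bound for the integrand of the regularized Gajewski semimetric:
with `hε(s) = (s + ε)(log(s + ε) − 1) + 1`, for all `u, v ≥ 0`,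
`hε(u) + hε(v) − 2 hε((u + v)/2) ≥ (u − v)² / (4 (max u v + ε))`. -/
theorem stmt_5 (ε : ℝ) (hε : 0 < ε) (hfun : ℝ → ℝ)
    (hdef : ∀ s : ℝ, 0 ≤ s → hfun s = (s + ε) * (Real.log (s + ε) - 1) + 1)
    (u v : ℝ) (hu : 0 ≤ u) (hv : 0 ≤ v) :
    hfun u + hfun v - 2 * hfun ((u + v) / 2)
      ≥ (u - v) ^ 2 / (4 * (max u v + ε)) := by
  have key := sq_div_le_mul_log_add_mul_log_sub_two_mul_midpoint
    (x := u + ε) (y := v + ε) (by positivity) (by positivity)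
  rw [max_add_add_right, add_sub_add_right_eq_sub,
    show (u + ε + (v + ε)) / 2 = (u + v) / 2 + ε by ring] at key
  rw [hdef u hu, hdef v hv, hdef _ (by positivity), ge_iff_le]
  linarith
end

section
/- Let n ≥ 1, let D, D₀ be real numbers with D ≠ 0, and let u : Fin n → ℝ with s = Σ_k u_k and D + (D₀ − D)·s ≠ 0. Define the n × n real matrices A₀ and A by: A₀ has diagonal entries (A₀)_{ii} = D + (D₀ − D)·(s − u_i) and off-diagonal entries (A₀)_{ij} = −(D₀ − D)·u_i for i ≠ j; and A_{ij} = (δ_{ij}·D + (D₀ − D)·u_i) / (D·(D + (D₀ − D)·s)), where δ_{ij} is the Kronecker delta. Then A₀ · A = 1 and A · A₀ = 1 (the identity matrix). -/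
/-- Inversion of the Maxwell–Stefan matrix for equal binary diffusivities
(proof of Corollary 4.1): with `(A₀)_{ii} = D + (D₀ − D)(s − u_i)`,
`(A₀)_{ij} = −(D₀ − D) u_i` for `i ≠ j`, and
`A_{ij} = (δ_{ij} D + (D₀ − D) u_i)/(D(D + (D₀ − D)s))`, where `s = Σ_k u_k`,
one has `A₀ A = A A₀ = 1`. -/
theorem stmt_9 (n : ℕ) (hn : 1 ≤ n) (D D₀ : ℝ) (hD : D ≠ 0) (u : Fin n → ℝ)
    (s : ℝ) (hs : s = ∑ k, u k) (hden : D + (D₀ - D) * s ≠ 0)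
    (A₀ A : Matrix (Fin n) (Fin n) ℝ)
    (hA₀ : ∀ i j, A₀ i j =
      if i = j then D + (D₀ - D) * (s - u i) else -((D₀ - D) * u i))
    (hA : ∀ i j, A i j =
      ((if i = j then D else 0) + (D₀ - D) * u i) / (D * (D + (D₀ - D) * s))) :
    A₀ * A = 1 ∧ A * A₀ = 1 := by
  have hA₀' : ∀ i k, A₀ i k = (if i = k then D + (D₀ - D) * s else 0) - (D₀ - D) * u i := by
    intro i k; rw [hA₀]; split <;> ring
  have hDden : D * (D + (D₀ - D) * s) ≠ 0 := mul_ne_zero hD hden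
  constructor
  · ext i j
    rw [Matrix.mul_apply, Matrix.one_apply]
    simp only [hA₀', hA, ← mul_div_assoc]
    rw [← Finset.sum_div]
    have : ∑ k, ((if i = k then D + (D₀ - D) * s else 0) - (D₀ - D) * u i) *
        ((if k = j then D else 0) + (D₀ - D) * u k)
        = (if i = j then D * (D + (D₀ - D) * s) else 0) := by
      have h1 : ∀ k : Fin n, ((if i = k then D + (D₀ - D) * s else 0) - (D₀ - D) * u i) *
          ((if k = j then D else 0) + (D₀ - D) * u k)
          = (if i = k then (D + (D₀ - D) * s) * ((if k = j then D else 0) + (D₀ - D) * u k) else 0)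
            - ((D₀ - D) * u i * (if k = j then D else 0) + (D₀ - D) * u i * ((D₀ - D) * u k)) := by
        intro k; split <;> ring
      simp only [h1, mul_ite, mul_zero]
      rw [Finset.sum_sub_distrib, Finset.sum_add_distrib, Finset.sum_ite_eq, Finset.sum_ite_eq']
      simp only [← Finset.mul_sum]
      rw [← hs]
      simp only [Finset.mem_univ, if_true]
      by_cases h : i = j <;> simp [h] <;> ring
    rw [this]
    split
    · exact div_self hDden
    · exact zero_div _
  · ext i j
    rw [Matrix.mul_apply, Matrix.one_apply]
    simp only [hA₀', hA, div_mul_eq_mul_div]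
    rw [← Finset.sum_div]
    have : ∑ k, ((if i = k then D else 0) + (D₀ - D) * u i) *
        ((if k = j then D + (D₀ - D) * s else 0) - (D₀ - D) * u k)
        = (if i = j then D * (D + (D₀ - D) * s) else 0) := by
      have h1 : ∀ k : Fin n, ((if i = k then D else 0) + (D₀ - D) * u i) *
          ((if k = j then D + (D₀ - D) * s else 0) - (D₀ - D) * u k)
          = (if i = k then D * ((if k = j then D + (D₀ - D) * s else 0) - (D₀ - D) * u k) else 0)
            + ((D₀ - D) * u i * (if k = j then D + (D₀ - D) * s else 0) - (D₀ - D) * u i * ((D₀ - D) * u k)) := by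
        intro k; split <;> ring
      simp only [h1, mul_ite, mul_zero]
      rw [Finset.sum_add_distrib, Finset.sum_sub_distrib, Finset.sum_ite_eq, Finset.sum_ite_eq']
      simp only [← Finset.mul_sum]
      rw [← hs]
      simp only [Finset.mem_univ, if_true]
      by_cases h : i = j <;> simp [h] <;> ring
    rw [this]
    split
    · exact div_self hDden
    · exact zero_div _
end
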